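/- (Lower-bound step from Appendix E.) In the CBwK setting, let b ∈ (0, min B) and assume the problem (r,c,B',ν) is feasible for some B' < B − b·1. Then for any minimizer λ*_B of λ ↦ L(λ,B) over λ ∈ [0,∞)^d, one has OPT(r,c,B) − OPT(r,c,B−b·1) ≥ b·‖λ*_B‖₁ ≥ b·‖λ*_B‖, where ‖·‖₁ is the ℓ1-norm and ‖·‖ the Euclidean norm. -/

import Mathlib

/-!
Weak duality bounds the reward of every policy that is feasible for `B - b·1` by
`L(λ*, B - b·1) = L(λ*, B) - b‖λ*‖₁`, because lowering the budget by `b·1` lowers the Lagrangian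
of every policy by `b ∑ λ*_i`. For the other side, strong duality `L(λ*, B) ≤ OPT(B)` comes from
separating the convex set of achievable (cost, reward) pairs from the open box
`{y < B, v > OPT(B)}`: Slater's condition makes the reward coefficient of the separating
functional negative, and normalising by it yields a multiplier `λ ≥ 0` with `L(λ, B) ≤ OPT(B)`.
The value `L(λ, B)` is attained by the deterministic policy playing a measurable argmax of the
Lagrangian payoff.
-/

open MeasureTheory Finset

namespace CBwK

variable {X : Type*} [MeasurableSpace X] {A : Type*} [Fintype A] [Nonempty A] {d : ℕ}

/-- A static policy: a measurable map `X → P(A)` with components `(π_a)_{a∈A}`. -/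
def IsPolicy (π : X → A → ℝ) : Prop :=
  (∀ x a, 0 ≤ π x a) ∧ (∀ x, ∑ a, π x a = 1) ∧ (∀ a, Measurable fun x => π x a)

/-- Expected reward `E_{X∼ν}[Σ_a r(X,a) π_a(X)]` of a policy. -/
noncomputable def polReward (ν : Measure X) (r : X → A → ℝ) (π : X → A → ℝ) : ℝ :=
  ∫ x, ∑ a, r x a * π x a ∂ν

/-- Component `i` of the expected cost vector `E_{X∼ν}[Σ_a c(X,a) π_a(X)]` of a policy. -/
noncomputable def polCost (ν : Measure X) (c : X → A → Fin d → ℝ) (π : X → A → ℝ)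
    (i : Fin d) : ℝ :=
  ∫ x, ∑ a, c x a i * π x a ∂ν

/-- The problem `(r,c,B',ν)` is feasible. -/
def Feasible (ν : Measure X) (c : X → A → Fin d → ℝ) (B' : Fin d → ℝ) : Prop :=
  ∃ π, IsPolicy π ∧ ∀ i, polCost ν c π i ≤ B' i

/-- `OPT(r,c,B')`: optimal expected reward under the expected-cost constraints `B'`. -/
noncomputable def OPT (ν : Measure X) (r : X → A → ℝ) (c : X → A → Fin d → ℝ)
    (B' : Fin d → ℝ) : ℝ :=
  sSup {y : ℝ | ∃ π, IsPolicy π ∧ (∀ i, polCost ν c π i ≤ B' i) ∧ y = polReward ν r π}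

/-- `L(λ,C) = E_{X∼ν}[ max_a { r(X,a) − ⟨c(X,a) − C, λ⟩ } ]`. -/
noncomputable def L (ν : Measure X) (r : X → A → ℝ) (c : X → A → Fin d → ℝ)
    (lam : Fin d → ℝ) (C : Fin d → ℝ) : ℝ :=
  ∫ x, Finset.univ.sup' Finset.univ_nonempty
    (fun a => r x a - ∑ i, (c x a i - C i) * lam i) ∂ν

/-- Euclidean norm on `ℝ^d`. -/
noncomputable def enorm (v : Fin d → ℝ) : ℝ := Real.sqrt (∑ i, (v i) ^ 2)

/-- ℓ1-norm on `ℝ^d`. -/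
noncomputable def l1norm (v : Fin d → ℝ) : ℝ := ∑ i, |v i|

/-- Smallest component of a vector of `ℝ^d` (junk value `0` if `d = 0`). -/
noncomputable def minComp (v : Fin d → ℝ) : ℝ := ⨅ i, v i

section Policies

variable {X : Type*} [MeasurableSpace X] {A : Type*} [Fintype A]

def IsBoundedMeasurable (φ : X → A → ℝ) : Prop :=
  (∀ a, Measurable fun x => φ x a) ∧ ∃ K, ∀ x a, |φ x a| ≤ K

lemma IsPolicy.abs_sum_mul_le {π : X → A → ℝ} (hπ : IsPolicy π) {φ : X → A → ℝ} {K : ℝ}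
    (hφ : ∀ x a, |φ x a| ≤ K) (x : X) : |∑ a, φ x a * π x a| ≤ K :=
  calc |∑ a, φ x a * π x a| ≤ ∑ a, |φ x a| * π x a := by
        refine (Finset.abs_sum_le_sum_abs _ _).trans_eq (Finset.sum_congr rfl fun a _ => ?_)
        rw [abs_mul, abs_of_nonneg (hπ.1 x a)]
    _ ≤ ∑ a, K * π x a := by
        gcongr with a
        · exact hπ.1 x a
        · exact hφ x a
    _ = K := by rw [← Finset.mul_sum, hπ.2.1 x, mul_one]

lemma IsPolicy.sum_mul_le_sup' [Nonempty A] {π : X → A → ℝ} (hπ : IsPolicy π)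
    (φ : X → A → ℝ) (x : X) : ∑ a, φ x a * π x a ≤ univ.sup' univ_nonempty (φ x) :=
  calc ∑ a, φ x a * π x a ≤ ∑ a, univ.sup' univ_nonempty (φ x) * π x a := by
        gcongr with a
        · exact hπ.1 x a
        · exact le_sup' _ (mem_univ a)
    _ = univ.sup' univ_nonempty (φ x) := by rw [← Finset.mul_sum, hπ.2.1 x, mul_one]

lemma IsPolicy.integrable_sum_mul {π : X → A → ℝ} (hπ : IsPolicy π) {φ : X → A → ℝ}
    (hφ : IsBoundedMeasurable φ) (ν : Measure X) [IsFiniteMeasure ν] :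
    Integrable (fun x => ∑ a, φ x a * π x a) ν := by
  obtain ⟨hmeas, K, hK⟩ := hφ
  refine Integrable.of_bound ?_ K (Filter.Eventually.of_forall (hπ.abs_sum_mul_le hK))
  exact (Finset.measurable_sum _ fun a _ => (hmeas a).mul (hπ.2.2 a)).aestronglyMeasurable

lemma convex_setOf_isPolicy : Convex ℝ {π : X → A → ℝ | IsPolicy π} := by
  rintro π₁ ⟨h₁0, h₁1, h₁m⟩ π₂ ⟨h₂0, h₂1, h₂m⟩ θ η hθ hη hθη
  refine ⟨fun x a => ?_, fun x => ?_, fun a => ?_⟩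
  · simp only [Pi.add_apply, Pi.smul_apply, smul_eq_mul]
    exact add_nonneg (mul_nonneg hθ (h₁0 x a)) (mul_nonneg hη (h₂0 x a))
  · simp only [Pi.add_apply, Pi.smul_apply, smul_eq_mul, Finset.sum_add_distrib,
      ← Finset.mul_sum, h₁1 x, h₂1 x, mul_one, hθη]
  · simp only [Pi.add_apply, Pi.smul_apply, smul_eq_mul]
    exact ((h₁m a).const_mul θ).add ((h₂m a).const_mul η)

lemma polReward_smul_add_smul {ν : Measure X} [IsFiniteMeasure ν] {φ : X → A → ℝ}
    (hφ : IsBoundedMeasurable φ) {π₁ π₂ : X → A → ℝ} (h₁ : IsPolicy π₁) (h₂ : IsPolicy π₂)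
    (θ η : ℝ) :
    polReward ν φ (θ • π₁ + η • π₂) = θ * polReward ν φ π₁ + η * polReward ν φ π₂ := by
  have hmix : ∀ x, ∑ a, φ x a * (θ • π₁ + η • π₂) x a
      = θ * ∑ a, φ x a * π₁ x a + η * ∑ a, φ x a * π₂ x a := fun x => by
    simp only [Pi.add_apply, Pi.smul_apply, smul_eq_mul, Finset.mul_sum, ← Finset.sum_add_distrib]
    exact Finset.sum_congr rfl fun a _ => by ring
  simp only [polReward, hmix]
  rw [integral_add ((h₁.integrable_sum_mul hφ ν).const_mul θ)
    ((h₂.integrable_sum_mul hφ ν).const_mul η), integral_const_mul, integral_const_mul]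

lemma exists_measurable_argmax {ι : Type*} [Finite ι] [Nonempty ι] {φ : X → ι → ℝ}
    (hφ : ∀ i, Measurable fun x => φ x i) :
    ∃ g : X → ι, (∀ i, MeasurableSet {x | g x = i}) ∧ ∀ x j, φ x j ≤ φ x (g x) := by
  classical
  obtain ⟨s, hs⟩ := exists_surjective_nat ι
  have hex : ∀ x, ∃ n, ∀ j, φ x j ≤ φ x (s n) := fun x => by
    obtain ⟨i, hi⟩ := Finite.exists_max (φ x)
    obtain ⟨n, rfl⟩ := hs i
    exact ⟨n, hi⟩
  have hN : Measurable fun x => Nat.find (hex x) :=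
    measurable_find hex fun n => by
      simpa only [Set.ofPred_forall] using
        MeasurableSet.iInter fun j => measurableSet_le (hφ j) (hφ (s n))
  exact ⟨fun x => s (Nat.find (hex x)),
    fun i => hN (MeasurableSet.of_discrete (s := {n | s n = i})), fun x => Nat.find_spec (hex x)⟩

lemma exists_isPolicy_sum_mul_eq_sup' [Nonempty A] {φ : X → A → ℝ}
    (hφ : ∀ a, Measurable fun x => φ x a) :
    ∃ π, IsPolicy π ∧ ∀ x, ∑ a, φ x a * π x a = univ.sup' univ_nonempty (φ x) := by
  classical
  obtain ⟨g, hg, hmax⟩ := exists_measurable_argmax hφ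
  refine ⟨fun x a => if g x = a then 1 else 0, ⟨fun x a => ?_, fun x => ?_, fun a => ?_⟩,
    fun x => ?_⟩
  · dsimp only; split_ifs <;> norm_num
  · simp
  · exact Measurable.ite (hg a) measurable_const measurable_const
  · simp only [mul_ite, mul_one, mul_zero, Finset.sum_ite_eq, Finset.mem_univ, if_true]
    exact le_antisymm (le_sup' _ (mem_univ _)) (Finset.sup'_le _ _ fun a _ => hmax x a)

end Policies

section Lagrangian

variable {X : Type*} [MeasurableSpace X] {A : Type*} {d : ℕ}
  {r : X → A → ℝ} {c : X → A → Fin d → ℝ}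

def lagrangianPayoff (r : X → A → ℝ) (c : X → A → Fin d → ℝ) (lam C : Fin d → ℝ) :
    X → A → ℝ :=
  fun x a => r x a - ∑ i, (c x a i - C i) * lam i

lemma measurable_lagrangianPayoff (hr : ∀ a, Measurable fun x => r x a)
    (hc : ∀ a i, Measurable fun x => c x a i) (lam C : Fin d → ℝ) (a : A) :
    Measurable fun x => lagrangianPayoff r c lam C x a := by
  unfold lagrangianPayoff
  fun_prop

variable [Fintype A] {ν : Measure X}

noncomputable def polLagrangian (ν : Measure X) (r : X → A → ℝ) (c : X → A → Fin d → ℝ)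
    (π : X → A → ℝ) (lam C : Fin d → ℝ) : ℝ :=
  polReward ν r π - ∑ i, lam i * (polCost ν c π i - C i)

lemma polReward_le_polLagrangian {π : X → A → ℝ} {lam C : Fin d → ℝ} (hlam : ∀ i, 0 ≤ lam i)
    (hcost : ∀ i, polCost ν c π i ≤ C i) : polReward ν r π ≤ polLagrangian ν r c π lam C := by
  have : ∑ i, lam i * (polCost ν c π i - C i) ≤ 0 :=
    Finset.sum_nonpos fun i _ => mul_nonpos_of_nonneg_of_nonpos (hlam i) (by linarith [hcost i])
  unfold polLagrangian
  linarith

lemma polLagrangian_sub_const (π : X → A → ℝ) (lam C : Fin d → ℝ) (b : ℝ) :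
    polLagrangian ν r c π lam (fun i => C i - b)
      = polLagrangian ν r c π lam C - b * ∑ i, lam i := by
  have : ∑ i, lam i * (polCost ν c π i - (C i - b))
      = ∑ i, lam i * (polCost ν c π i - C i) + b * ∑ i, lam i := by
    rw [Finset.mul_sum, ← Finset.sum_add_distrib]
    exact Finset.sum_congr rfl fun i _ => by ring
  rw [polLagrangian, polLagrangian, this]
  ring

lemma sum_lagrangianPayoff_mul {π : X → A → ℝ} (hπ : IsPolicy π) (lam C : Fin d → ℝ) (x : X) :
    ∑ a, lagrangianPayoff r c lam C x a * π x a
      = ∑ a, r x a * π x a - ∑ i, lam i * (∑ a, c x a i * π x a - C i) := by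
  have hi : ∀ i, ∑ a, (c x a i - C i) * lam i * π x a = lam i * (∑ a, c x a i * π x a - C i) :=
    fun i => calc
      ∑ a, (c x a i - C i) * lam i * π x a
          = lam i * ∑ a, c x a i * π x a - lam i * C i * ∑ a, π x a := by
        rw [Finset.mul_sum, Finset.mul_sum, ← Finset.sum_sub_distrib]
        exact Finset.sum_congr rfl fun a _ => by ring
      _ = lam i * (∑ a, c x a i * π x a - C i) := by rw [hπ.2.1 x]; ring
  rw [← Finset.sum_congr rfl fun i _ => hi i, Finset.sum_comm, ← Finset.sum_sub_distrib]
  exact Finset.sum_congr rfl fun a _ => by rw [lagrangianPayoff, sub_mul, Finset.sum_mul]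

variable [IsProbabilityMeasure ν] (hr : IsBoundedMeasurable r)
  (hc : ∀ i, IsBoundedMeasurable fun x a => c x a i)
include hr hc

lemma integrable_sum_lagrangianPayoff_mul {π : X → A → ℝ} (hπ : IsPolicy π)
    (lam C : Fin d → ℝ) :
    Integrable (fun x => ∑ a, lagrangianPayoff r c lam C x a * π x a) ν := by
  simp only [sum_lagrangianPayoff_mul hπ]
  exact (hπ.integrable_sum_mul hr ν).sub (integrable_finsetSum _ fun i _ =>
    ((hπ.integrable_sum_mul (hc i) ν).sub (integrable_const _)).const_mul _)

lemma polReward_lagrangianPayoff {π : X → A → ℝ} (hπ : IsPolicy π) (lam C : Fin d → ℝ) :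
    polReward ν (lagrangianPayoff r c lam C) π = polLagrangian ν r c π lam C := by
  have hcost : ∀ i ∈ univ, Integrable (fun x => lam i * (∑ a, c x a i * π x a - C i)) ν :=
    fun i _ => ((hπ.integrable_sum_mul (hc i) ν).sub (integrable_const _)).const_mul _
  simp only [polReward, sum_lagrangianPayoff_mul hπ]
  rw [integral_sub (hπ.integrable_sum_mul hr ν) (integrable_finsetSum _ hcost),
    integral_finsetSum _ hcost]
  refine congrArg _ (Finset.sum_congr rfl fun i _ => ?_)
  rw [integral_const_mul, integral_sub (hπ.integrable_sum_mul (hc i) ν) (integrable_const _),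
    integral_const, probReal_univ, one_smul]
  rfl

variable [Nonempty A]

lemma polLagrangian_le_L {π : X → A → ℝ} (hπ : IsPolicy π) (lam C : Fin d → ℝ) :
    polLagrangian ν r c π lam C ≤ L ν r c lam C := by
  obtain ⟨πmax, hπmax, hmax⟩ := exists_isPolicy_sum_mul_eq_sup'
    (measurable_lagrangianPayoff hr.1 (fun a i => (hc i).1 a) lam C)
  rw [← polReward_lagrangianPayoff hr hc hπ]
  refine integral_mono (integrable_sum_lagrangianPayoff_mul hr hc hπ lam C) ?_
    (fun x => hπ.sum_mul_le_sup' _ x)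
  exact (integrable_sum_lagrangianPayoff_mul hr hc hπmax lam C).congr
    (Filter.Eventually.of_forall hmax)

lemma exists_polLagrangian_eq_L (lam C : Fin d → ℝ) :
    ∃ π, IsPolicy π ∧ polLagrangian ν r c π lam C = L ν r c lam C := by
  obtain ⟨π, hπ, hmax⟩ := exists_isPolicy_sum_mul_eq_sup'
    (measurable_lagrangianPayoff hr.1 (fun a i => (hc i).1 a) lam C)
  refine ⟨π, hπ, ?_⟩
  rw [← polReward_lagrangianPayoff hr hc hπ]
  exact integral_congr_ae (Filter.Eventually.of_forall hmax)

end Lagrangian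

section Separation

variable {ι : Type*}

lemma nonneg_of_forall_sub_mul_lt {a k u : ℝ} (h : ∀ s : ℝ, 0 ≤ s → a - s * k < u) :
    0 ≤ k := by
  by_contra! hk
  have := h (|u - a| / -k) (div_nonneg (abs_nonneg _) (by linarith))
  rw [div_mul_eq_mul_div, div_neg, mul_div_cancel_right₀ _ hk.ne] at this
  linarith [le_abs_self (u - a)]

lemma le_of_forall_pos_add_mul_lt {a k u : ℝ} (h : ∀ δ : ℝ, 0 < δ → a + δ * k < u) : a ≤ u := by
  have hlim :
      Filter.Tendsto (fun δ : ℝ => a + δ * k) (nhdsWithin 0 (Set.Ioi 0)) (nhds a) := by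
    have hcont : Continuous fun δ : ℝ => a + δ * k := by fun_prop
    simpa using (hcont.tendsto 0).mono_left nhdsWithin_le_nhds
  exact le_of_tendsto hlim (eventually_nhdsWithin_of_forall fun δ hδ => (h δ hδ).le)

lemma apply_single_nonneg_of_forall_lt [DecidableEq ι] {f : (ι → ℝ) × ℝ →L[ℝ] ℝ}
    {B : ι → ℝ} {V u : ℝ} (hf : ∀ y v, (∀ i, y i < B i) → V < v → f (y, v) < u) (j : ι) :
    0 ≤ f (Pi.single j 1, 0) := by
  refine nonneg_of_forall_sub_mul_lt (a := f (B - 1, V + 1)) (u := u) fun s hs => ?_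
  have hlt := hf (B - 1 - s • Pi.single j 1) (V + 1) (fun i => ?_) (by linarith)
  · have hpt : (B - 1 - s • Pi.single j 1, V + 1)
        = ((B - 1, V + 1) : (ι → ℝ) × ℝ) - s • ((Pi.single j 1 : ι → ℝ), (0 : ℝ)) := by
      ext <;> simp
    rwa [hpt, map_sub, map_smul, smul_eq_mul] at hlt
  · have : 0 ≤ s * (Pi.single j 1 : ι → ℝ) i :=
      mul_nonneg hs (by rw [Pi.single_apply]; split_ifs <;> norm_num)
    simp only [Pi.sub_apply, Pi.one_apply, Pi.smul_apply, smul_eq_mul]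
    linarith

lemma apply_le_of_forall_lt {f : (ι → ℝ) × ℝ →L[ℝ] ℝ} {B : ι → ℝ} {V u : ℝ}
    (hf : ∀ y v, (∀ i, y i < B i) → V < v → f (y, v) < u) : f (B, V) ≤ u := by
  refine le_of_forall_pos_add_mul_lt (k := f (-1, 1)) fun δ hδ => ?_
  have hlt := hf (B - δ • 1) (V + δ) (fun i => by simp; linarith) (by linarith)
  have hpt : (B - δ • 1, V + δ) = ((B, V) : (ι → ℝ) × ℝ) + δ • ((-1 : ι → ℝ), (1 : ℝ)) := by
    ext <;> simp [sub_eq_add_neg]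
  rwa [hpt, map_add, map_smul, smul_eq_mul] at hlt

variable [Fintype ι]

lemma apply_eq_sum_add [DecidableEq ι] (f : (ι → ℝ) × ℝ →L[ℝ] ℝ) (p : (ι → ℝ) × ℝ) :
    f p = ∑ i, p.1 i * f (Pi.single i 1, 0) + p.2 * f (0, 1) := by
  have hp : p = ∑ i, p.1 i • ((Pi.single i 1 : ι → ℝ), (0 : ℝ)) + p.2 • (0, 1) := by
    ext j <;> simp [Prod.fst_sum, Prod.snd_sum, Pi.single_apply]
  conv_lhs => rw [hp]
  simp only [map_add, map_sum, map_smul, smul_eq_mul]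

theorem exists_multiplier_of_slater {S : Set ((ι → ℝ) × ℝ)} (hS : Convex ℝ S) {B : ι → ℝ}
    {V : ℝ} (hslater : ∃ p ∈ S, ∀ i, p.1 i < B i)
    (hV : ∀ p ∈ S, (∀ i, p.1 i < B i) → p.2 ≤ V) :
    ∃ lam : ι → ℝ, (∀ i, 0 ≤ lam i) ∧ ∀ p ∈ S, p.2 - ∑ i, lam i * (p.1 i - B i) ≤ V := by
  classical
  set D : Set ((ι → ℝ) × ℝ) := (Set.univ.pi fun i => Set.Iio (B i)) ×ˢ Set.Ioi V
  have hD : ∀ y v, (y, v) ∈ D ↔ (∀ i, y i < B i) ∧ V < v := by simp [D]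
  have hdisj : Disjoint D S := Set.disjoint_left.2 fun p hpD hpS =>
    ((hD p.1 p.2).1 hpD).2.not_ge (hV p hpS ((hD p.1 p.2).1 hpD).1)
  obtain ⟨f, u, hfD, hfS⟩ := geometric_hahn_banach_open
    ((convex_pi fun i _ => convex_Iio (B i)).prod (convex_Ioi V))
    ((isOpen_set_pi Set.finite_univ fun i _ => isOpen_Iio).prod isOpen_Ioi) hS hdisj
  have hfD' : ∀ y v, (∀ i, y i < B i) → V < v → f (y, v) < u :=
    fun y v hy hv => hfD (y, v) ((hD y v).2 ⟨hy, hv⟩)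
  set t := f (0, 1)
  -- Slater's point lifted above level `V` lies in the open set, which forces `t < 0`.
  have ht : t < 0 := by
    obtain ⟨p, hpS, hp⟩ := hslater
    set v := max V p.2 + 1
    have hlt := hfD' p.1 v hp (by linarith [le_max_left V p.2])
    have hpt : (p.1, v) = p + (v - p.2) • ((0 : ι → ℝ), (1 : ℝ)) := by ext <;> simp
    rw [hpt, map_add, map_smul, smul_eq_mul] at hlt
    have hneg : (v - p.2) * t < 0 := by linarith [hfS p hpS]
    exact neg_of_mul_neg_right hneg (by linarith [le_max_right V p.2])
  refine ⟨fun i => f (Pi.single i 1, 0) / -t,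
    fun i => div_nonneg (apply_single_nonneg_of_forall_lt hfD' i) (by linarith), fun p hpS => ?_⟩
  have hsep := (apply_le_of_forall_lt hfD').trans (hfS p hpS)
  rw [apply_eq_sum_add f, apply_eq_sum_add f p] at hsep
  have hsum : ∑ i, f (Pi.single i 1, 0) / -t * (p.1 i - B i)
      = (∑ i, p.1 i * f (Pi.single i 1, 0) - ∑ i, B i * f (Pi.single i 1, 0)) / -t := by
    rw [← Finset.sum_sub_distrib, Finset.sum_div]
    exact Finset.sum_congr rfl fun i _ => by ring
  rw [hsum, sub_le_comm, le_div_iff₀ (by linarith)]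
  simp only at hsep
  linarith

end Separation

section Duality

variable {X : Type*} [MeasurableSpace X] {A : Type*} [Fintype A] {d : ℕ}
  {ν : Measure X} {r : X → A → ℝ} {c : X → A → Fin d → ℝ}

def achievableSet (ν : Measure X) (r : X → A → ℝ) (c : X → A → Fin d → ℝ) :
    Set ((Fin d → ℝ) × ℝ) :=
  (fun π => (polCost ν c π, polReward ν r π)) '' {π | IsPolicy π}

lemma convex_achievableSet [IsFiniteMeasure ν] (hr : IsBoundedMeasurable r)
    (hc : ∀ i, IsBoundedMeasurable fun x a => c x a i) : Convex ℝ (achievableSet ν r c) := by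
  rintro _ ⟨π₁, h₁, rfl⟩ _ ⟨π₂, h₂, rfl⟩ θ η hθ hη hθη
  refine ⟨θ • π₁ + η • π₂, convex_setOf_isPolicy h₁ h₂ hθ hη hθη, ?_⟩
  ext i
  · exact polReward_smul_add_smul (hc i) h₁ h₂ θ η
  · exact polReward_smul_add_smul hr h₁ h₂ θ η

lemma OPT_le {C : Fin d → ℝ} {M : ℝ} (hfeas : Feasible ν c C)
    (h : ∀ π, IsPolicy π → (∀ i, polCost ν c π i ≤ C i) → polReward ν r π ≤ M) :
    OPT ν r c C ≤ M := by
  obtain ⟨π₀, hπ₀, hcost₀⟩ := hfeas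
  exact csSup_le ⟨_, π₀, hπ₀, hcost₀, rfl⟩ fun y ⟨π, hπ, hcost, hy⟩ => hy ▸ h π hπ hcost

variable [IsProbabilityMeasure ν] [Nonempty A] (hr : IsBoundedMeasurable r)
  (hc : ∀ i, IsBoundedMeasurable fun x a => c x a i)
include hr hc

lemma polReward_le_OPT {π : X → A → ℝ} (hπ : IsPolicy π) {C : Fin d → ℝ}
    (hcost : ∀ i, polCost ν c π i ≤ C i) : polReward ν r π ≤ OPT ν r c C := by
  refine le_csSup ⟨L ν r c 0 C, ?_⟩ ⟨π, hπ, hcost, rfl⟩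
  rintro _ ⟨π', hπ', hcost', rfl⟩
  exact (polReward_le_polLagrangian (fun _ => le_rfl) hcost').trans
    (polLagrangian_le_L hr hc hπ' 0 C)

theorem exists_L_le_OPT {B : Fin d → ℝ}
    (hslater : ∃ π, IsPolicy π ∧ ∀ i, polCost ν c π i < B i) :
    ∃ lam : Fin d → ℝ, (∀ i, 0 ≤ lam i) ∧ L ν r c lam B ≤ OPT ν r c B := by
  obtain ⟨π₀, hπ₀, hcost₀⟩ := hslater
  obtain ⟨lam, hlam, hmult⟩ := exists_multiplier_of_slater (convex_achievableSet hr hc)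
    ⟨_, ⟨π₀, hπ₀, rfl⟩, hcost₀⟩ (V := OPT ν r c B) (by
      rintro _ ⟨π, hπ, rfl⟩ hcost
      exact polReward_le_OPT hr hc hπ fun i => (hcost i).le)
  obtain ⟨π, hπ, hπL⟩ := exists_polLagrangian_eq_L hr hc (ν := ν) lam B
  exact ⟨lam, hlam, hπL ▸ hmult _ ⟨π, hπ, rfl⟩⟩

end Duality

lemma l1norm_of_nonneg {d : ℕ} {v : Fin d → ℝ} (hv : ∀ i, 0 ≤ v i) : l1norm v = ∑ i, v i :=
  Finset.sum_congr rfl fun i _ => abs_of_nonneg (hv i)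

lemma enorm_le_l1norm {d : ℕ} (v : Fin d → ℝ) : enorm v ≤ l1norm v := by
  unfold enorm l1norm
  rw [Real.sqrt_le_left (Finset.sum_nonneg fun i _ => abs_nonneg _)]
  simpa only [sq_abs] using Finset.sum_sq_le_sq_sum_of_nonneg fun i _ => abs_nonneg (v i)

theorem opt_gap_lower_bound_general
    {X : Type*} [MeasurableSpace X] (ν : Measure X) [IsProbabilityMeasure ν]
    {A : Type*} [Fintype A] [Nonempty A] {d : ℕ}
    (r : X → A → ℝ) (c : X → A → Fin d → ℝ) (B : Fin d → ℝ) (b : ℝ)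
    (hr : ∀ x a, r x a ∈ Set.Icc (0 : ℝ) 1)
    (hc : ∀ x a i, c x a i ∈ Set.Icc (-1 : ℝ) 1)
    (hrm : ∀ a, Measurable fun x => r x a)
    (hcm : ∀ a i, Measurable fun x => c x a i)
    (hb0 : 0 < b)
    (hfeas : ∃ B' : Fin d → ℝ, (∀ i, B' i < B i - b) ∧ Feasible ν c B')
    (lamstar : Fin d → ℝ) (hls0 : ∀ i, 0 ≤ lamstar i)
    (hmin : ∀ lam : Fin d → ℝ, (∀ i, 0 ≤ lam i) → L ν r c lamstar B ≤ L ν r c lam B) :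
    b * l1norm lamstar ≤ OPT ν r c B - OPT ν r c (fun i => B i - b)
      ∧ b * enorm lamstar ≤ b * l1norm lamstar := by
  have hr' : IsBoundedMeasurable r :=
    ⟨hrm, 1, fun x a => abs_le.2 ⟨by linarith [(hr x a).1], (hr x a).2⟩⟩
  have hc' : ∀ i, IsBoundedMeasurable fun x a => c x a i :=
    fun i => ⟨fun a => hcm a i, 1, fun x a => abs_le.2 (hc x a i)⟩
  obtain ⟨B', hB', π₀, hπ₀, hcost₀⟩ := hfeas
  have hcost_shift : ∀ i, polCost ν c π₀ i ≤ B i - b := fun i => (hcost₀ i).trans (hB' i).le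
  obtain ⟨lam, hlam, hL⟩ := exists_L_le_OPT (ν := ν) (B := B) hr' hc'
    ⟨π₀, hπ₀, fun i => by linarith [hcost_shift i]⟩
  have hstrong : L ν r c lamstar B ≤ OPT ν r c B := (hmin lam hlam).trans hL
  have hweak : OPT ν r c (fun i => B i - b) ≤ L ν r c lamstar B - b * ∑ i, lamstar i :=
    OPT_le ⟨π₀, hπ₀, hcost_shift⟩ fun π hπ hcost => calc
      polReward ν r π ≤ polLagrangian ν r c π lamstar (fun i => B i - b) :=
        polReward_le_polLagrangian hls0 hcost
      _ = polLagrangian ν r c π lamstar B - b * ∑ i, lamstar i := polLagrangian_sub_const π _ _ _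
      _ ≤ L ν r c lamstar B - b * ∑ i, lamstar i :=
        sub_le_sub_right (polLagrangian_le_L hr' hc' hπ _ _) _
  refine ⟨?_, mul_le_mul_of_nonneg_left (enorm_le_l1norm lamstar) hb0.le⟩
  rw [l1norm_of_nonneg hls0]
  linarith

/-- Lower-bound step from Appendix E: if `b ∈ (0, min B)` and the problem is feasible for
some `B' < B − b·1`, then any minimizer `λ*_B` of `λ ↦ L(λ,B)` over `λ ≥ 0` satisfies
`OPT(r,c,B) − OPT(r,c,B−b·1) ≥ b‖λ*_B‖₁ ≥ b‖λ*_B‖`. -/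
theorem opt_gap_lower_bound
    {X : Type*} [MeasurableSpace X] (ν : Measure X) [IsProbabilityMeasure ν]
    {A : Type*} [Fintype A] [Nonempty A] {d : ℕ} (hd : 0 < d)
    (r : X → A → ℝ) (c : X → A → Fin d → ℝ) (B : Fin d → ℝ) (b : ℝ)
    (hr : ∀ x a, r x a ∈ Set.Icc (0 : ℝ) 1)
    (hc : ∀ x a i, c x a i ∈ Set.Icc (-1 : ℝ) 1)
    (hrm : ∀ a, Measurable fun x => r x a)
    (hcm : ∀ a i, Measurable fun x => c x a i)
    (hb0 : 0 < b) (hb : b < minComp B)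
    (hfeas : ∃ B' : Fin d → ℝ, (∀ i, B' i < B i - b) ∧ Feasible ν c B')
    (lamstar : Fin d → ℝ) (hls0 : ∀ i, 0 ≤ lamstar i)
    (hmin : ∀ lam : Fin d → ℝ, (∀ i, 0 ≤ lam i) → L ν r c lamstar B ≤ L ν r c lam B) :
    b * l1norm lamstar ≤ OPT ν r c B - OPT ν r c (fun i => B i - b)
      ∧ b * enorm lamstar ≤ b * l1norm lamstar :=
  opt_gap_lower_bound_general ν r c B b hr hc hrm hcm hb0 hfeas lamstar hls0 hmin

end CBwK
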